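/- arXiv:1808.08420 — 2 statements merged into one kernel-verified Lean document; each statement's English description precedes it below -/
import Mathlib

section
/- Setting g(t) = f'(t)^{m-1}·(f'(t) + t·f''(t)), there exist constants C > 0 and T > 0 such that for all t ≥ T, |g(t) - 4^{-m}·(1 - 4e·t^{1-m})| ≤ C·t^{2-2m}. -/
/-- Tail of the binomial expansion: `(x+s)^(n+1) = x^(n+1) + (n+1) x^n s + s^2 * binP n x s`. -/
def binP : ℕ → ℝ → ℝ → ℝ
  | 0, _, _ => 0
  | (n+1), x, s => ((n:ℝ)+1) * x^n + (x+s) * binP n x s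

lemma binP_spec (n : ℕ) (x s : ℝ) :
    (x+s)^(n+1) = x^(n+1) + ((n:ℝ)+1)*x^n*s + s^2 * binP n x s := by
  induction n with
  | zero => simp [binP]
  | succ n ih =>
    rw [pow_succ, ih]
    show _ = _ + _ + s ^ 2 * (((n:ℝ)+1) * x^n + (x+s) * binP n x s)
    push_cast
    ring

lemma binP_bound (n : ℕ) (x s : ℝ) :
    |binP n x s| ≤ (n:ℝ)^2 * (max 1 (|x|+|s|))^n := by
  induction n with
  | zero => simp [binP]
  | succ n ih =>
    have hM1 : (1:ℝ) ≤ max 1 (|x|+|s|) := le_max_left _ _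
    have hM0 : (0:ℝ) ≤ max 1 (|x|+|s|) := by linarith
    have hxM : |x| ≤ max 1 (|x|+|s|) :=
      le_trans (le_add_of_nonneg_right (abs_nonneg _)) (le_max_right _ _)
    have hxsM : |x+s| ≤ max 1 (|x|+|s|) := le_trans (abs_add_le _ _) (le_max_right _ _)
    have hpow : |x|^n ≤ (max 1 (|x|+|s|))^n := pow_le_pow_left₀ (abs_nonneg _) hxM n
    have hpow2 : (max 1 (|x|+|s|))^n ≤ (max 1 (|x|+|s|))^(n+1) :=
      pow_le_pow_right₀ hM1 (by omega)
    calc |((n:ℝ)+1) * x^n + (x+s) * binP n x s|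
        ≤ |((n:ℝ)+1) * x^n| + |(x+s) * binP n x s| := abs_add_le _ _
      _ = ((n:ℝ)+1) * |x|^n + |x+s| * |binP n x s| := by
          rw [abs_mul, abs_mul, abs_pow, abs_of_nonneg (by positivity : (0:ℝ) ≤ (n:ℝ)+1)]
      _ ≤ ((n:ℝ)+1) * (max 1 (|x|+|s|))^n
          + (max 1 (|x|+|s|)) * ((n:ℝ)^2 * (max 1 (|x|+|s|))^n) := by
          gcongr
      _ ≤ ((n:ℝ)+1)^2 * (max 1 (|x|+|s|))^(n+1) := by
          have h1 : ((n:ℝ)+1) * (max 1 (|x|+|s|))^n ≤ ((n:ℝ)+1) * (max 1 (|x|+|s|))^(n+1) := by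
            gcongr
          have h2 : (max 1 (|x|+|s|)) * ((n:ℝ)^2 * (max 1 (|x|+|s|))^n)
              = (n:ℝ)^2 * (max 1 (|x|+|s|))^(n+1) := by ring
          nlinarith [pow_nonneg hM0 (n+1)]
      _ = ((n+1:ℕ):ℝ)^2 * (max 1 (|x|+|s|))^(n+1) := by push_cast; ring

/-- Setting `g(t) = f'(t)^{m-1} (f'(t) + t f''(t))` for
`f(t) = t/4 + e(1 - t^{2-m})/(2-m) + c t^{1-m}`, there exist `C > 0` and `T > 0` such that
for all `t ≥ T`, `|g(t) - 4^{-m}(1 - 4 e t^{1-m})| ≤ C t^{2-2m}`. -/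
theorem stmt5 (m : ℕ) (hm : 2 < m) (e c : ℝ) (f f' f'' : ℝ → ℝ)
    (hf : ∀ t : ℝ, 0 < t →
      f t = t / 4 + e * (1 - t ^ ((2 : ℤ) - m)) / ((2 : ℝ) - m) + c * t ^ ((1 : ℤ) - m))
    (hf' : ∀ t : ℝ, 0 < t → HasDerivAt f (f' t) t)
    (hf'' : ∀ t : ℝ, 0 < t → HasDerivAt f' (f'' t) t) :
    ∃ C > (0 : ℝ), ∃ T > (0 : ℝ), ∀ t ≥ T,
      |f' t ^ (m - 1) * (f' t + t * f'' t)
          - (4 : ℝ) ^ (-(m : ℤ)) * (1 - 4 * e * t ^ ((1 : ℤ) - m))|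
        ≤ C * t ^ ((2 : ℤ) - 2 * m) := by
  -- first derivative formula
  have hd1 : ∀ t : ℝ, 0 < t →
      f' t = 1/4 - e * t ^ ((1:ℤ) - m) + c * (1 - (m:ℝ)) * t ^ (-(m:ℤ)) := by
    intro t ht
    have hm2 : ((2:ℝ) - m) ≠ 0 := by
      have : (2:ℝ) < m := by exact_mod_cast hm
      linarith
    have h1 : HasDerivAt (fun s : ℝ => s / 4) (1/4) t := by
      simpa using (hasDerivAt_id t).div_const 4
    have h2 := hasDerivAt_zpow ((2:ℤ) - m) t (Or.inl ht.ne')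
    have h3 := hasDerivAt_zpow ((1:ℤ) - m) t (Or.inl ht.ne')
    have h4 : HasDerivAt (fun s : ℝ => e * (1 - s ^ ((2:ℤ) - m)) / ((2:ℝ) - m))
        (e * (0 - ((2 - m : ℤ) : ℝ) * t ^ ((2:ℤ) - m - 1)) / ((2:ℝ) - m)) t :=
      (((hasDerivAt_const t (1:ℝ)).sub h2).const_mul e).div_const _
    have h5 : HasDerivAt (fun s : ℝ => c * s ^ ((1:ℤ) - m))
        (c * (((1 - m : ℤ) : ℝ) * t ^ ((1:ℤ) - m - 1))) t := h3.const_mul c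
    have hF := (h1.add h4).add h5
    have hev : f =ᶠ[nhds t] fun s : ℝ =>
        s / 4 + e * (1 - s ^ ((2 : ℤ) - m)) / ((2 : ℝ) - m) + c * s ^ ((1 : ℤ) - m) :=
      (isOpen_Ioi.eventually_mem ht).mono fun s hs => hf s hs
    have := (hf' t ht).unique (hF.congr_of_eventuallyEq hev)
    rw [this]
    have e1 : (2:ℤ) - m - 1 = 1 - m := by ring
    have e2 : (1:ℤ) - m - 1 = -(m:ℤ) := by ring
    rw [e1, e2]
    push_cast
    field_simp
    ring
  -- second derivative formula
  have hd2 : ∀ t : ℝ, 0 < t →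
      f'' t = e * ((m:ℝ) - 1) * t ^ (-(m:ℤ)) - c * (1 - (m:ℝ)) * (m:ℝ) * t ^ (-(m:ℤ) - 1) := by
    intro t ht
    have h3 := hasDerivAt_zpow ((1:ℤ) - m) t (Or.inl ht.ne')
    have h6 := hasDerivAt_zpow (-(m:ℤ)) t (Or.inl ht.ne')
    have hG : HasDerivAt (fun s : ℝ =>
        1/4 - e * s ^ ((1:ℤ) - m) + c * (1 - (m:ℝ)) * s ^ (-(m:ℤ)))
        (0 - e * (((1 - m : ℤ) : ℝ) * t ^ ((1:ℤ) - m - 1))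
          + c * (1 - (m:ℝ)) * (((-m : ℤ) : ℝ) * t ^ (-(m:ℤ) - 1))) t :=
      ((hasDerivAt_const t ((1:ℝ)/4)).sub (h3.const_mul e)).add
        (h6.const_mul (c * (1 - (m:ℝ))))
    have hev : f' =ᶠ[nhds t] fun s : ℝ =>
        1/4 - e * s ^ ((1:ℤ) - m) + c * (1 - (m:ℝ)) * s ^ (-(m:ℤ)) :=
      (isOpen_Ioi.eventually_mem ht).mono fun s hs => hd1 s hs
    have := (hf'' t ht).unique (hG.congr_of_eventuallyEq hev)
    rw [this]
    have e2 : (1:ℤ) - m - 1 = -(m:ℤ) := by ring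
    rw [e2]
    push_cast
    ring
  -- setup of constants
  obtain ⟨n, rfl⟩ : ∃ n, m = n + 3 := ⟨m - 3, by omega⟩
  set K₁ : ℝ := |e| + |c| * ((n:ℝ) + 2) with hK₁
  set K₂ : ℝ := |e| * ((n:ℝ) + 1) + |c| * ((n:ℝ) + 2)^2 with hK₂
  set K₃ : ℝ := ((n:ℝ) + 1)^2 * (5/4 + K₁)^(n+1) with hK₃
  have hK₁0 : 0 ≤ K₁ := by positivity
  have hK₂0 : 0 ≤ K₂ := by positivity
  have hK₃0 : 0 ≤ K₃ := by positivity
  set C : ℝ := ((n:ℝ) + 2) * (1/4)^(n+1) * K₁ * K₂ + K₁^2 * K₃ * (1/4 + K₂) + 1 with hC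
  refine ⟨C, by positivity, 1, one_pos, ?_⟩
  intro t ht
  have ht0 : (0:ℝ) < t := lt_of_lt_of_le one_pos ht
  set M : ℝ := ((n + 3 : ℕ) : ℝ) with hM
  have hMval : M = (n:ℝ) + 3 := by rw [hM]; push_cast; ring
  set x : ℝ := t ^ ((1:ℤ) - (n + 3 : ℕ)) with hx
  set y : ℝ := t ^ (-((n + 3 : ℕ):ℤ)) with hy
  set z : ℝ := t ^ (-((n + 3 : ℕ):ℤ) - 1) with hz
  have hx0 : 0 < x := zpow_pos ht0 _
  have hy0 : 0 < y := zpow_pos ht0 _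
  have hx1 : x ≤ 1 := by
    calc x ≤ t ^ (0:ℤ) := zpow_le_zpow_right₀ ht (by omega)
      _ = 1 := zpow_zero t
  have hyx : y ≤ x := zpow_le_zpow_right₀ ht (by omega)
  have hty : t * y = x := by
    rw [hx, hy, ← zpow_one_add₀ ht0.ne']
    congr 1
  have htz : t * z = y := by
    rw [hy, hz, ← zpow_one_add₀ ht0.ne']
    congr 1
  have hxx : x * x = t ^ ((2:ℤ) - 2 * (n + 3 : ℕ)) := by
    rw [hx, ← zpow_add₀ ht0.ne']
    congr 1
    omega
  set ε : ℝ := (-e) * x + c * (1 - M) * y with hε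
  set δ : ℝ := e * (M - 2) * x + c * (1 - M)^2 * y with hδ
  have hf'val : f' t = 1/4 + ε := by
    rw [hd1 t ht0, ← hx, ← hy, hε]
    ring
  have hBval : f' t + t * f'' t = 1/4 + δ := by
    rw [hd1 t ht0, hd2 t ht0, ← hx, ← hy, ← hz, hδ]
    have expand : t * (e * (M - 1) * y - c * (1 - M) * M * z)
        = e * (M - 1) * (t * y) - c * (1 - M) * M * (t * z) := by ring
    rw [expand, hty, htz]
    ring
  -- binomial expansion
  have hb := binP_spec (n+1) (1/4) ε
  rw [show n+1+1 = n+2 by omega] at hb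
  have h4m : (4:ℝ) ^ (-((n + 3 : ℕ) : ℤ)) = (1/4:ℝ)^(n+3) := by
    rw [zpow_neg, zpow_natCast, ← inv_pow]
    norm_num
  have key : f' t ^ ((n + 3) - 1) * (f' t + t * f'' t)
      - (4 : ℝ) ^ (-((n + 3 : ℕ) : ℤ)) * (1 - 4 * e * x)
      = ((n:ℝ) + 2) * (1/4)^(n+1) * ε * δ + ε^2 * binP (n+1) (1/4) ε * (1/4 + δ) := by
    rw [hBval, hf'val, show (n + 3) - 1 = n + 2 by omega, hb, h4m, hε, hδ, hMval]
    push_cast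
    ring
  -- bounds on ε and δ
  have h1M : |1 - M| = (n:ℝ) + 2 := by
    rw [hMval, show (1:ℝ) - ((n:ℝ) + 3) = -((n:ℝ) + 2) by ring, abs_neg,
      abs_of_nonneg (by positivity)]
  have hεb : |ε| ≤ K₁ * x := by
    rw [hε]
    calc |(-e) * x + c * (1 - M) * y|
        ≤ |(-e) * x| + |c * (1 - M) * y| := abs_add_le _ _
      _ = |e| * x + |c| * |1 - M| * y := by
          rw [abs_mul, abs_mul, abs_mul, abs_neg, abs_of_pos hx0, abs_of_pos hy0]
      _ = |e| * x + |c| * ((n:ℝ) + 2) * y := by rw [h1M]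
      _ ≤ |e| * x + |c| * ((n:ℝ) + 2) * x := by gcongr
      _ = K₁ * x := by rw [hK₁]; ring
  have hδb : |δ| ≤ K₂ * x := by
    rw [hδ]
    calc |e * (M - 2) * x + c * (1 - M)^2 * y|
        ≤ |e * (M - 2) * x| + |c * (1 - M)^2 * y| := abs_add_le _ _
      _ = |e| * |M - 2| * x + |c| * (|1 - M|)^2 * y := by
          rw [abs_mul, abs_mul, abs_mul, abs_mul, abs_of_pos hx0, abs_of_pos hy0, abs_pow]
      _ = |e| * ((n:ℝ) + 1) * x + |c| * ((n:ℝ) + 2)^2 * y := by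
          rw [h1M, hMval, show (n:ℝ) + 3 - 2 = (n:ℝ) + 1 by ring,
            abs_of_nonneg (by positivity : (0:ℝ) ≤ (n:ℝ) + 1)]
      _ ≤ |e| * ((n:ℝ) + 1) * x + |c| * ((n:ℝ) + 2)^2 * x := by gcongr
      _ = K₂ * x := by rw [hK₂]; ring
  have hεb1 : |ε| ≤ K₁ := hεb.trans (mul_le_of_le_one_right hK₁0 hx1)
  have hδb1 : |δ| ≤ K₂ := hδb.trans (mul_le_of_le_one_right hK₂0 hx1)
  have hqb : |binP (n+1) (1/4) ε| ≤ K₃ := by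
    refine (binP_bound (n+1) (1/4) ε).trans ?_
    have hmax0 : (0:ℝ) ≤ max 1 (|(1/4:ℝ)| + |ε|) := le_trans zero_le_one (le_max_left _ _)
    have hmax : max 1 (|(1/4:ℝ)| + |ε|) ≤ 5/4 + K₁ := by
      refine max_le (by linarith) ?_
      rw [show |(1/4:ℝ)| = 1/4 by norm_num]
      linarith
    calc ((n+1:ℕ):ℝ)^2 * (max 1 (|(1/4:ℝ)| + |ε|))^(n+1)
        ≤ ((n+1:ℕ):ℝ)^2 * (5/4 + K₁)^(n+1) := by gcongr
      _ = K₃ := by rw [hK₃]; push_cast; ring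
  have h14δ : |1/4 + δ| ≤ 1/4 + K₂ := by
    calc |1/4 + δ| ≤ |(1/4:ℝ)| + |δ| := abs_add_le _ _
      _ ≤ 1/4 + K₂ := by rw [show |(1/4:ℝ)| = 1/4 by norm_num]; linarith
  -- final estimate
  calc |f' t ^ ((n + 3) - 1) * (f' t + t * f'' t)
        - (4 : ℝ) ^ (-((n + 3 : ℕ) : ℤ)) * (1 - 4 * e * x)|
      = |((n:ℝ) + 2) * (1/4)^(n+1) * ε * δ + ε^2 * binP (n+1) (1/4) ε * (1/4 + δ)| := by
        rw [key]
    _ ≤ |((n:ℝ) + 2) * (1/4)^(n+1) * ε * δ|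
        + |ε^2 * binP (n+1) (1/4) ε * (1/4 + δ)| := abs_add_le _ _
    _ = ((n:ℝ) + 2) * (1/4)^(n+1) * |ε| * |δ|
        + |ε|^2 * |binP (n+1) (1/4) ε| * |1/4 + δ| := by
        simp only [abs_mul, abs_pow]
        rw [abs_of_nonneg (by positivity : (0:ℝ) ≤ ((n:ℝ) + 2)),
          show |(1/4:ℝ)| = 1/4 by norm_num]
    _ ≤ ((n:ℝ) + 2) * (1/4)^(n+1) * (K₁ * x) * (K₂ * x)
        + (K₁ * x)^2 * K₃ * (1/4 + K₂) := by
        gcongr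
    _ = (((n:ℝ) + 2) * (1/4)^(n+1) * K₁ * K₂ + K₁^2 * K₃ * (1/4 + K₂)) * (x * x) := by
        ring
    _ ≤ C * (x * x) := by
        have hxx0 : (0:ℝ) ≤ x * x := by positivity
        have : ((n:ℝ) + 2) * (1/4)^(n+1) * K₁ * K₂ + K₁^2 * K₃ * (1/4 + K₂) ≤ C := by
          rw [hC]; linarith
        exact mul_le_mul_of_nonneg_right this hxx0
    _ = C * t ^ ((2:ℤ) - 2 * (n + 3 : ℕ)) := by rw [hxx]
end

section
/- Define h(t) = g'(t)/(f'(t) + t·f''(t)), where g(t) = f'(t)^{m-1}·(f'(t) + t·f''(t)). Then there exist constants C > 0 and T > 0 such that for all t ≥ T, |h(t) - 4^{2-m}·(m-1)·e·t^{-m}| ≤ C·t^{1-2m}. -/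
/-!
Write `A = f'`, `B = f' + t f''` and `B'` for the derivative of `B`. Then
`h = ((m-1) A^{m-2} A' B + A^{m-1} B') / B = A^{m-2} ((m-1) A' + B') - A^{m-2} (B - A) B' / B`,
and the bracket is exactly `(m-1) e t^{-m}`: the `c t^{-m-1}` terms of `(m-1) f''` and of `B'`
cancel. As `A - 1/4` and `B - A = t f''` are `O(t^{1-m})` while `B' = O(t^{-m})` and `B → 1/4`,
both `(A^{m-2} - 4^{2-m}) (m-1) e t^{-m}` and the second term are `O(t^{1-2m})`.
-/

open Asymptotics Filter Topology Set

lemma isBigO_zpow_atTop_of_le {k l : ℤ} (hkl : k ≤ l) :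
    (fun t : ℝ => t ^ k) =O[atTop] fun t => t ^ l := by
  refine IsBigO.of_bound 1 ?_
  filter_upwards [eventually_ge_atTop 1] with t ht
  have ht0 : (0 : ℝ) ≤ t := by linarith
  rw [one_mul, Real.norm_of_nonneg (zpow_nonneg ht0 _), Real.norm_of_nonneg (zpow_nonneg ht0 _)]
  exact zpow_le_zpow_right₀ ht hkl

lemma isBigO_const_mul_zpow_add_const_mul_zpow {k₁ k₂ l : ℤ} (h₁ : k₁ ≤ l) (h₂ : k₂ ≤ l)
    (a b : ℝ) : (fun t : ℝ => a * t ^ k₁ + b * t ^ k₂) =O[atTop] fun t => t ^ l :=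
  ((isBigO_zpow_atTop_of_le h₁).const_mul_left a).add
    ((isBigO_zpow_atTop_of_le h₂).const_mul_left b)

lemma exists_pos_bound_of_isBigO_zpow {u : ℝ → ℝ} {k : ℤ}
    (hu : u =O[atTop] fun t => t ^ k) :
    ∃ C > (0 : ℝ), ∃ T > (0 : ℝ), ∀ t ≥ T, |u t| ≤ C * t ^ k := by
  obtain ⟨C, hC, hCu⟩ := hu.exists_pos
  obtain ⟨T, hT⟩ := eventually_atTop.mp hCu.bound
  refine ⟨C, hC, max T 1, by positivity, fun t ht => ?_⟩
  have ht0 : 0 < t := lt_of_lt_of_le one_pos (le_of_max_le_right ht)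
  simpa [Real.norm_eq_abs, abs_of_pos ht0, abs_of_pos (zpow_pos ht0 k)] using
    hT t (le_of_max_le_left ht)

lemma eq_of_hasDerivAt_of_eqOn_Ioi {F G F' G' : ℝ → ℝ} (hFG : ∀ t, 0 < t → F t = G t)
    (hF : ∀ t, 0 < t → HasDerivAt F (F' t) t) (hG : ∀ t, 0 < t → HasDerivAt G (G' t) t) :
    ∀ t, 0 < t → F' t = G' t := fun t ht =>
  (hF t ht).unique <| (hG t ht).congr_of_eventuallyEq <|
    eventually_of_mem (Ioi_mem_nhds ht) fun s hs => hFG s hs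

lemma HasDerivAt.pow_succ_mul_add_mul {A A₁ A₂ : ℝ → ℝ} {t : ℝ} (n : ℕ)
    (hA : HasDerivAt A (A₁ t) t) (hA₁ : HasDerivAt A₁ (A₂ t) t) :
    HasDerivAt (fun s => A s ^ (n + 1) * (A s + s * A₁ s))
      ((n + 1) * A t ^ n * A₁ t * (A t + t * A₁ t) + A t ^ (n + 1) * (2 * A₁ t + t * A₂ t)) t := by
  refine ((hA.fun_pow (n + 1)).fun_mul (hA.fun_add ((hasDerivAt_id' t).fun_mul hA₁))).congr_deriv ?_
  rw [Nat.add_sub_cancel]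
  push_cast
  ring

theorem isBigO_pow_deriv_div_sub {α : Type*} {l : Filter α} {A A₁ B B' u v : α → ℝ} {a : ℝ}
    (n : ℕ) (ha : a ≠ 0) (hu : Tendsto u l (𝓝 0)) (hA : (fun x => A x - a) =O[l] u)
    (hBA : (fun x => B x - A x) =O[l] u) (hB' : B' =O[l] v)
    (hφ : (fun x => (n + 1) * A₁ x + B' x) =O[l] v) :
    (fun x => ((n + 1) * A x ^ n * A₁ x * B x + A x ^ (n + 1) * B' x) / B x
        - a ^ n * ((n + 1) * A₁ x + B' x)) =O[l] fun x => u x * v x := by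
  have hAa : Tendsto A l (𝓝 a) := tendsto_sub_nhds_zero_iff.mp (hA.trans_tendsto hu)
  have hBa : Tendsto B l (𝓝 a) := by
    refine tendsto_sub_nhds_zero_iff.mp (((hBA.add hA).congr_left fun x => ?_).trans_tendsto hu)
    ring
  have hpow : (fun x => A x ^ n - a ^ n) =O[l] u :=
    ((hasDerivAt_pow n a).isBigO_sub.comp_tendsto hAa).trans hA
  have hAn : (fun x => A x ^ n) =O[l] fun _ => (1 : ℝ) := (hAa.pow n).isBigO_one ℝ
  have hBinv : (fun x => (B x)⁻¹) =O[l] fun _ => (1 : ℝ) := (hBa.inv₀ ha).isBigO_one ℝ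
  have hB0 : ∀ᶠ x in l, B x ≠ 0 := hBa.eventually_ne ha
  have hrest : (fun x => A x ^ n * (B x - A x) * (B' x * (B x)⁻¹)) =O[l] fun x => u x * v x := by
    simpa using (hAn.mul hBA).mul (hB'.mul hBinv)
  -- the quotient minus `aⁿ φ` equals `(Aⁿ - aⁿ) φ - Aⁿ (B - A) B' / B`
  refine ((hpow.mul hφ).sub hrest).congr' ?_ .rfl
  filter_upwards [hB0] with x hx
  field_simp
  ring

namespace Profile

variable (m : ℕ) (e c : ℝ)

-- `f₁`, `f₂`, `f₃` are `f'`, `f''`, `f'''` in closed form.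

noncomputable def f₁ (t : ℝ) : ℝ :=
  1 / 4 - e * t ^ ((1 : ℤ) - m) - ((m : ℝ) - 1) * c * t ^ (-(m : ℤ))

noncomputable def f₂ (t : ℝ) : ℝ :=
  ((m : ℝ) - 1) * e * t ^ (-(m : ℤ)) + m * ((m : ℝ) - 1) * c * t ^ (-(m : ℤ) - 1)

noncomputable def f₃ (t : ℝ) : ℝ :=
  -(m * ((m : ℝ) - 1) * e * t ^ (-(m : ℤ) - 1))
    - m * ((m : ℝ) - 1) * (m + 1) * c * t ^ (-(m : ℤ) - 2)

variable {m} in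
lemma hasDerivAt_f (hm : m ≠ 2) {t : ℝ} (ht : t ≠ 0) :
    HasDerivAt
      (fun s => s / 4 + e * (1 - s ^ ((2 : ℤ) - m)) / ((2 : ℝ) - m) + c * s ^ ((1 : ℤ) - m))
      (f₁ m e c t) t := by
  have hm' : (2 : ℝ) - m ≠ 0 := sub_ne_zero.mpr (by exact_mod_cast hm.symm)
  refine ((((hasDerivAt_id' t).div_const 4).fun_add
    ((((hasDerivAt_zpow _ t (.inl ht)).const_sub 1).const_mul e).div_const _)).fun_add
    ((hasDerivAt_zpow _ t (.inl ht)).const_mul c)).congr_deriv ?_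
  simp only [f₁, zpow_sub₀ ht, zpow_neg, zpow_natCast, zpow_ofNat]
  push_cast
  field_simp
  ring

lemma hasDerivAt_f₁ {t : ℝ} (ht : t ≠ 0) : HasDerivAt (f₁ m e c) (f₂ m e c t) t := by
  refine (((hasDerivAt_zpow _ t (.inl ht)).const_mul e).const_sub (1 / 4) |>.fun_sub
    ((hasDerivAt_zpow _ t (.inl ht)).const_mul _)).congr_deriv ?_
  simp only [f₂, zpow_sub₀ ht, zpow_neg, zpow_natCast, zpow_ofNat]
  push_cast
  field_simp
  ring

lemma hasDerivAt_f₂ {t : ℝ} (ht : t ≠ 0) : HasDerivAt (f₂ m e c) (f₃ m e c t) t := by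
  refine (((hasDerivAt_zpow _ t (.inl ht)).const_mul _).fun_add
    ((hasDerivAt_zpow _ t (.inl ht)).const_mul _)).congr_deriv ?_
  simp only [f₃, zpow_sub₀ ht, zpow_neg, zpow_natCast, zpow_ofNat]
  push_cast
  field_simp
  ring

lemma f₁_sub_isBigO :
    (fun t => f₁ m e c t - 1 / 4) =O[atTop] fun t => t ^ ((1 : ℤ) - m) := by
  refine (isBigO_const_mul_zpow_add_const_mul_zpow (k₂ := -(m : ℤ)) le_rfl (by omega) (-e)
    (-(((m : ℝ) - 1) * c))).congr_left fun t => ?_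
  simp only [f₁]
  ring

lemma mul_f₂_isBigO :
    (fun t => t * f₂ m e c t) =O[atTop] fun t => t ^ ((1 : ℤ) - m) := by
  refine (isBigO_const_mul_zpow_add_const_mul_zpow (k₂ := -(m : ℤ)) le_rfl (by omega)
    (((m : ℝ) - 1) * e) (m * ((m : ℝ) - 1) * c)).congr' ?_ .rfl
  filter_upwards [eventually_ne_atTop 0] with t ht
  simp only [f₂, zpow_sub₀ ht, zpow_neg, zpow_natCast, zpow_ofNat]
  field_simp

lemma two_mul_f₂_add_mul_f₃_isBigO :
    (fun t => 2 * f₂ m e c t + t * f₃ m e c t) =O[atTop] fun t => t ^ (-(m : ℤ)) := by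
  refine (isBigO_const_mul_zpow_add_const_mul_zpow (k₂ := -(m : ℤ) - 1) le_rfl (by omega)
    (-(((m : ℝ) - 1) * (m - 2) * e)) (-(m * ((m : ℝ) - 1) ^ 2 * c))).congr' ?_ .rfl
  filter_upwards [eventually_ne_atTop 0] with t ht
  simp only [f₂, f₃, zpow_sub₀ ht, zpow_neg, zpow_natCast, zpow_ofNat]
  field_simp
  ring

lemma sub_one_mul_f₂_add_two_mul_f₂_add_mul_f₃ {t : ℝ} (ht : t ≠ 0) :
    ((m : ℝ) - 1) * f₂ m e c t + (2 * f₂ m e c t + t * f₃ m e c t)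
      = ((m : ℝ) - 1) * e * t ^ (-(m : ℤ)) := by
  simp only [f₂, f₃, zpow_sub₀ ht, zpow_neg, zpow_natCast, zpow_ofNat]
  field_simp
  ring

theorem isBigO_deriv_div_sub (n : ℕ) :
    (fun t : ℝ => ((n + 1) * f₁ (n + 2) e c t ^ n * f₂ (n + 2) e c t
            * (f₁ (n + 2) e c t + t * f₂ (n + 2) e c t)
          + f₁ (n + 2) e c t ^ (n + 1) * (2 * f₂ (n + 2) e c t + t * f₃ (n + 2) e c t))
          / (f₁ (n + 2) e c t + t * f₂ (n + 2) e c t)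
        - (1 / 4) ^ n * (((n + 2 : ℕ) : ℝ) - 1) * e * t ^ (-((n + 2 : ℕ) : ℤ)))
      =O[atTop] fun t => t ^ ((1 : ℤ) - 2 * (n + 2 : ℕ)) := by
  have hφ : ∀ᶠ t in atTop, ((n + 2 : ℕ) - 1) * e * t ^ (-((n + 2 : ℕ) : ℤ))
      = (n + 1) * f₂ (n + 2) e c t + (2 * f₂ (n + 2) e c t + t * f₃ (n + 2) e c t) := by
    filter_upwards [eventually_ne_atTop 0] with t ht
    rw [← sub_one_mul_f₂_add_two_mul_f₂_add_mul_f₃ _ e c ht]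
    push_cast
    ring
  have hBA : (fun t => f₁ (n + 2) e c t + t * f₂ (n + 2) e c t - f₁ (n + 2) e c t)
      =O[atTop] fun t => t ^ ((1 : ℤ) - (n + 2 : ℕ)) :=
    (mul_f₂_isBigO (n + 2) e c).congr_left fun t => (add_sub_cancel_left _ _).symm
  have key := isBigO_pow_deriv_div_sub n (by norm_num : (1 / 4 : ℝ) ≠ 0)
    (tendsto_zpow_atTop_zero (by omega)) (f₁_sub_isBigO (n + 2) e c) hBA
    (two_mul_f₂_add_mul_f₃_isBigO (n + 2) e c)
    (((isBigO_refl _ _).const_mul_left _).congr' hφ .rfl)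
  refine (key.trans ((isBigO_refl _ _).congr' .rfl ?_)).congr' ?_ .rfl
  · filter_upwards [eventually_ne_atTop 0] with t ht
    rw [← zpow_add₀ ht]
    congr 1
    ring
  · filter_upwards [hφ] with t ht
    rw [← ht]
    ring

end Profile

open Profile in
/-- Define `h(t) = g'(t) / (f'(t) + t f''(t))` where `g(t) = f'(t)^{m-1} (f'(t) + t f''(t))` for
`f(t) = t/4 + e(1 - t^{2-m})/(2-m) + c t^{1-m}`. Then there exist `C > 0` and `T > 0` such that
for all `t ≥ T`, `|h(t) - 4^{2-m} (m-1) e t^{-m}| ≤ C t^{1-2m}`. -/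
theorem stmt7 (m : ℕ) (hm : 2 < m) (e c : ℝ) (f f' f'' g g' : ℝ → ℝ)
    (hf : ∀ t : ℝ, 0 < t →
      f t = t / 4 + e * (1 - t ^ ((2 : ℤ) - m)) / ((2 : ℝ) - m) + c * t ^ ((1 : ℤ) - m))
    (hf' : ∀ t : ℝ, 0 < t → HasDerivAt f (f' t) t)
    (hf'' : ∀ t : ℝ, 0 < t → HasDerivAt f' (f'' t) t)
    (hg : ∀ t : ℝ, 0 < t → g t = f' t ^ (m - 1) * (f' t + t * f'' t))
    (hg' : ∀ t : ℝ, 0 < t → HasDerivAt g (g' t) t) :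
    ∃ C > (0 : ℝ), ∃ T > (0 : ℝ), ∀ t ≥ T,
      |g' t / (f' t + t * f'' t)
          - (4 : ℝ) ^ ((2 : ℤ) - m) * ((m : ℝ) - 1) * e * t ^ (-(m : ℤ))|
        ≤ C * t ^ ((1 : ℤ) - 2 * m) := by
  obtain ⟨n, rfl⟩ : ∃ n, m = n + 2 := ⟨m - 2, by omega⟩
  have hf₁ : ∀ t, 0 < t → f' t = f₁ (n + 2) e c t :=
    eq_of_hasDerivAt_of_eqOn_Ioi hf hf' fun t ht => hasDerivAt_f e c (by omega) ht.ne'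
  have hf₂ : ∀ t, 0 < t → f'' t = f₂ (n + 2) e c t :=
    eq_of_hasDerivAt_of_eqOn_Ioi hf₁ hf'' fun t ht => hasDerivAt_f₁ _ e c ht.ne'
  have hg₁ := eq_of_hasDerivAt_of_eqOn_Ioi
    (fun t ht => by rw [hg t ht, hf₁ t ht, hf₂ t ht]; rfl) hg' fun t ht =>
      (hasDerivAt_f₁ _ e c ht.ne').pow_succ_mul_add_mul n (hasDerivAt_f₂ _ e c ht.ne')
  have h4 : (4 : ℝ) ^ ((2 : ℤ) - (n + 2 : ℕ)) = (1 / 4) ^ n := by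
    rw [show (2 : ℤ) - (n + 2 : ℕ) = -n by push_cast; ring, zpow_neg, zpow_natCast, one_div,
      inv_pow]
  refine exists_pos_bound_of_isBigO_zpow ((isBigO_deriv_div_sub e c n).congr' ?_ .rfl)
  filter_upwards [eventually_gt_atTop 0] with t ht
  rw [hg₁ t ht, hf₁ t ht, hf₂ t ht, h4]
end
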